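/- arXiv:2106.11560 — 2 statements merged into one kernel-verified Lean document; each statement's English description precedes it below -/
import Mathlib

section
/- Let G be a semi-Markovian DAG satisfying Assumption 1. Let x_t ∈ X^(o) be a node with a directed edge x_t → t. Let G_e be the sub-sampled graph built from x_t and an arbitrary subset V_0 ⊆ {t}, and let Z ⊆ X^(o) \ {x_t}. Then Z satisfies the back-door criterion relative to (t, y) in G if and only if e and y are d-separated by Z ∪ {t} in G_e. -/
namespace CausalDAG

variable {V : Type*}

/-- Adjacency: an edge between `u` and `v` in either direction. -/
def Adj (E : V → V → Prop) (u v : V) : Prop := E u v ∨ E v u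

/-- `d` is a descendant of `v`: there is a directed path from `v` to `d`. -/
def Descendant (E : V → V → Prop) (v d : V) : Prop := Relation.TransGen E v d

/-- The directed graph with edge relation `E` is acyclic. -/
def Acyclic (E : V → V → Prop) : Prop := ∀ v, ¬ Relation.TransGen E v v

/-- A path between `a` and `b` in the graph with edge relation `E`:
a sequence of at least two distinct nodes, starting at `a`, ending at `b`,
with consecutive nodes joined by an edge (in either direction). -/
structure GPath (E : V → V → Prop) (a b : V) where
  nodes : List V
  nodup : nodes.Nodup
  two_le : 2 ≤ nodes.length
  head_eq : nodes.head? = some a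
  last_eq : nodes.getLast? = some b
  chain : nodes.Chain' (Adj E)

namespace GPath

variable {E : V → V → Prop} {a b : V}

/-- `i` is an interior position of the path. -/
def Interior (p : GPath E a b) (i : ℕ) : Prop := 0 < i ∧ i + 1 < p.nodes.length

/-- The node at interior position `i` is a collider on the path: both adjacent
edges of the path point into it. -/
def ColliderAt (p : GPath E a b) (i : ℕ) : Prop :=
  ∃ x v z, p.nodes[i - 1]? = some x ∧ p.nodes[i]? = some v ∧
    p.nodes[i + 1]? = some z ∧ E x v ∧ E z v

/-- The path is blocked by the set `S`. -/
def BlockedBy (p : GPath E a b) (S : Set V) : Prop :=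
  ∃ i v, p.Interior i ∧ p.nodes[i]? = some v ∧
    ((¬ p.ColliderAt i ∧ v ∈ S) ∨
      (p.ColliderAt i ∧ v ∉ S ∧ ∀ d, Descendant E v d → d ∉ S))

/-- The path contains the directed edge `u → v` as one of its steps. -/
def UsesEdge (p : GPath E a b) (u v : V) : Prop :=
  E u v ∧ ∃ i, (p.nodes[i]? = some u ∧ p.nodes[i + 1]? = some v) ∨
    (p.nodes[i]? = some v ∧ p.nodes[i + 1]? = some u)

/-- The path contains an edge pointing into its first endpoint. -/
def IntoFirst (p : GPath E a b) : Prop :=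
  ∃ w, p.nodes[1]? = some w ∧ E w a

end GPath

/-- `a` and `b` are d-separated by `S`: every path between them is blocked by `S`. -/
def DSep (E : V → V → Prop) (a b : V) (S : Set V) : Prop :=
  ∀ p : GPath E a b, p.BlockedBy S

/-- `Z` satisfies the back-door criterion relative to `(t, y)`: no node of `Z` is a
descendant of `t`, and `Z` blocks every path between `t` and `y` containing an edge
pointing into `t`. -/
def BackDoor (E : V → V → Prop) (t y : V) (Z : Set V) : Prop :=
  (∀ z ∈ Z, ¬ Descendant E t z) ∧
  ∀ p : GPath E t y, p.IntoFirst → p.BlockedBy Z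

/-- A semi-Markovian DAG: observed features `Xo`, unobserved features `Xu`,
treatment `t`, outcome `y`; unobserved nodes have no parents and at most two
children. -/
structure SemiMarkov (V : Type*) where
  E : V → V → Prop
  Xo : Set V
  Xu : Set V
  t : V
  y : V
  acyclic : Acyclic E
  t_ne_y : t ≠ y
  t_notin : t ∉ Xo ∪ Xu
  y_notin : y ∉ Xo ∪ Xu
  disjoint : Disjoint Xo Xu
  cover : ∀ v, v ∈ Xo ∨ v ∈ Xu ∨ v = t ∨ v = y
  unobs_no_parents : ∀ u ∈ Xu, ∀ w, ¬ E w u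
  unobs_children : ∀ u ∈ Xu, ∃ a b, ∀ c, E u c → c = a ∨ c = b

/-- Assumption 1: `y` is the only child of `t`, and `y` has no children. -/
def Assumption1 (M : SemiMarkov V) : Prop :=
  M.E M.t M.y ∧ (∀ w, M.E M.t w → w = M.y) ∧ ∀ w, ¬ M.E M.y w

/-- Edge relation of the sub-sampled graph `G_e`: a new node `e` (represented by
`none`) is added, together with the edge `x_t → e` and an edge `v → e` for each
`v ∈ V0`. -/
def subEdge (E : V → V → Prop) (xt : V) (V0 : Set V) :
    Option V → Option V → Prop
  | some u, some v => E u v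
  | some u, none => u = xt ∨ u ∈ V0
  | none, _ => False

end CausalDAG

/-!
In `G_e` the node `e` has no children, so an `e`–`y` path starts `e ← x_t` (a path `e ← t` is
blocked by `t`, a conditioned non-collider); hence `e` and `y` are d-separated by `Z ∪ {t}` iff
every `x_t`–`y` path of `G` is blocked by `Z ∪ {t}`. An open back-door path `t ← w ⋯ y` gives an
open `x_t`–`y` path: prepend `x_t → t ← w`, where `t` is an opened collider, or cut the path at
`x_t` if it already passes through `x_t`. Conversely, an open `x_t`–`y` path gives a back-door path
`t ← x_t ⋯ y`, or, if it passes through `t` (necessarily as a collider), its suffix from `t`. That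
back-door path is open given `Z`, except that a collider may be opened only by the descendant `t`;
rerouting the last such collider along its directed path to `t` produces a back-door path open
given `Z`. Since `y` is the only descendant of `t`, no node of `Z` descends from `t`.
-/

namespace CausalDAG

variable {V : Type*} {E : V → V → Prop}

section Lists

variable {α : Type*}

theorem getLast?_eq_of_suffix {l₁ l₂ : List α} (h : l₁ <:+ l₂) (hne : l₁ ≠ []) :
    l₁.getLast? = l₂.getLast? := by
  obtain ⟨s, rfl⟩ := h
  exact (List.getLast?_append_of_ne_nil s hne).symm

theorem triple_infix_iff {x v z : α} {l : List α} :
    [x, v, z] <:+: l ↔ ∃ i, l[i]? = some x ∧ l[i + 1]? = some v ∧ l[i + 2]? = some z := by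
  rw [List.infix_iff_getElem?]
  constructor
  · rintro ⟨k, -, h⟩
    exact ⟨k, by simpa using h 0, by simpa [Nat.add_comm] using h 1,
      by simpa [Nat.add_comm] using h 2⟩
  · rintro ⟨i, hx, hv, hz⟩
    refine ⟨i, by
      have := (List.getElem?_eq_some_iff.mp hz).1
      simp only [List.length_cons, List.length_nil]
      omega, ?_⟩
    intro j hj
    simp only [List.length_cons, List.length_nil] at hj
    interval_cases j <;> simpa [Nat.add_comm] using ‹_›

theorem mem_tail_of_triple_infix {x v z : α} {l : List α} (h : [x, v, z] <:+: l) :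
    v ∈ l.tail := by
  cases l with
  | nil => simp at h
  | cons a l =>
    rcases List.infix_cons_iff.mp h with ⟨s, hs⟩ | h
    · cases hs
      simp
    · exact h.subset (by simp)

theorem exists_eq_map_some {l : List (Option α)} (h : none ∉ l) :
    ∃ l' : List α, l = l'.map some := by
  induction l with
  | nil => exact ⟨[], rfl⟩
  | cons o l ih =>
    obtain ⟨a, rfl⟩ := Option.ne_none_iff_exists'.mp (fun ho => h (ho ▸ List.mem_cons_self))
    obtain ⟨l', rfl⟩ := ih (fun hl => h (List.mem_cons_of_mem _ hl))
    exact ⟨a :: l', rfl⟩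

end Lists

theorem Acyclic.asymm (hAc : Acyclic E) {a b : V} (h : E a b) : ¬ E b a :=
  fun h' => hAc a (.tail (.single h) h')

/-- A path through `x, v, z` is open at `v`: a collider needs itself or a descendant in `C`, a
non-collider must avoid `N`. D-connection given `S` is the case `N = C = S`; keeping the two sets
apart lets colliders be opened by `t` without `t` blocking non-colliders. -/
def Transmits (E : V → V → Prop) (N C : Set V) (x v z : V) : Prop :=
  (E x v ∧ E z v → ∃ d ∈ C, Relation.ReflTransGen E v d) ∧ (¬ (E x v ∧ E z v) → v ∉ N)

def DConnecting (E : V → V → Prop) (N C : Set V) (l : List V) : Prop :=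
  ∀ x v z, [x, v, z] <:+: l → Transmits E N C x v z

section Transmits

variable {N C N' C' : Set V} {x v z : V}

theorem transmits_of_not_rel (hxv : ¬ E x v) (hv : v ∉ N) : Transmits E N C x v z :=
  ⟨fun h => (hxv h.1).elim, fun _ => hv⟩

theorem transmits_of_mem (hxv : E x v) (hzv : E z v) (hv : v ∈ C) : Transmits E N C x v z :=
  ⟨fun _ => ⟨v, hv, .refl⟩, fun h => (h ⟨hxv, hzv⟩).elim⟩

theorem Transmits.mono (h : Transmits E N C x v z) (hN : N' ⊆ N) (hC : C ⊆ C') :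
    Transmits E N' C' x v z :=
  ⟨fun hc => (h.1 hc).imp fun _ hd => ⟨hC hd.1, hd.2⟩, fun hc hv => h.2 hc (hN hv)⟩

end Transmits

namespace DConnecting

variable {N C N' C' : Set V} {l l' : List V}

theorem of_isInfix (h : DConnecting E N C l) (h' : l' <:+: l) : DConnecting E N C l' :=
  fun x v z hxvz => h x v z (hxvz.trans h')

theorem mono (h : DConnecting E N C l) (hN : N' ⊆ N) (hC : C ⊆ C') : DConnecting E N' C' l :=
  fun x v z hxvz => (h x v z hxvz).mono hN hC

theorem cons {a b : V} (h : DConnecting E N C (b :: l))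
    (hab : ∀ c ∈ l.head?, Transmits E N C a b c) : DConnecting E N C (a :: b :: l) := by
  intro x v z hxvz
  rcases List.infix_cons_iff.mp hxvz with ⟨s, hs⟩ | hxvz
  · cases l with
    | nil => simp at hs
    | cons c l =>
      simp only [List.cons_append, List.cons.injEq] at hs
      obtain ⟨rfl, rfl, rfl, -⟩ := hs
      exact hab z rfl
  · exact h x v z hxvz

theorem insert_of_not_mem {t : V} (h : DConnecting E N C l) (ht : t ∉ l.tail) :
    DConnecting E (insert t N) (insert t C) l := by
  intro x v z hxvz
  have hvt : v ≠ t := fun hvt => ht (hvt ▸ mem_tail_of_triple_infix hxvz)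
  obtain ⟨hcol, hncol⟩ := h x v z hxvz
  exact ⟨fun hc => (hcol hc).imp fun _ hd => ⟨Set.mem_insert_of_mem t hd.1, hd.2⟩,
    fun hc hv => hncol hc (hv.resolve_left hvt)⟩

end DConnecting

namespace GPath

variable {a b : V}

theorem exists_eq_cons_cons (p : GPath E a b) : ∃ w l, p.nodes = a :: w :: l := by
  have hlen := p.two_le
  have hhead := p.head_eq
  rcases hp : p.nodes with _ | ⟨a', _ | ⟨w, l⟩⟩
  · simp [hp] at hlen
  · simp [hp] at hlen
  · rw [hp, List.head?_cons, Option.some.injEq] at hhead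
    exact ⟨w, l, by rw [hhead]⟩

theorem head_not_mem_tail (p : GPath E a b) : a ∉ p.nodes.tail := by
  obtain ⟨w, l, hp⟩ := p.exists_eq_cons_cons
  have hnd := p.nodup
  rw [hp] at hnd ⊢
  exact (List.nodup_cons.mp hnd).1

theorem head_not_mem_of_suffix (p : GPath E a b) {x : V} {r : List V} (h : x :: r <:+ p.nodes) :
    a ∉ r := by
  obtain ⟨w, l, hp⟩ := p.exists_eq_cons_cons
  have hnd := p.nodup
  rw [hp] at h hnd
  rcases List.suffix_cons_iff.mp h with h | h
  · obtain ⟨-, rfl⟩ := List.cons.inj h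
    exact (List.nodup_cons.mp hnd).1
  · exact fun ha => (List.nodup_cons.mp hnd).1 (h.subset (List.mem_cons_of_mem x ha))

theorem exists_suffix_of_mem (p : GPath E a b) {v : V} (hv : v ∈ p.nodes) (hva : v ≠ a)
    (hvb : v ≠ b) : ∃ x w s, x :: v :: w :: s <:+ p.nodes := by
  obtain ⟨s₁, s₂, hs⟩ := List.append_of_mem hv
  rcases List.eq_nil_or_concat s₁ with rfl | ⟨L, x, rfl⟩
  · have hhead := p.head_eq
    rw [hs, List.nil_append, List.head?_cons, Option.some.injEq] at hhead
    exact absurd hhead hva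
  rcases s₂ with _ | ⟨w, s⟩
  · have hlast := p.last_eq
    rw [hs, List.getLast?_append, List.getLast?_singleton] at hlast
    exact absurd (by simpa using hlast) hvb
  · exact ⟨x, w, s, L, by rw [hs]; simp⟩

def cons {c : V} (p : GPath E b c) (ha : a ∉ p.nodes) (hab : Adj E a b) : GPath E a c where
  nodes := a :: p.nodes
  nodup := List.nodup_cons.mpr ⟨ha, p.nodup⟩
  two_le := by have := p.two_le; simp only [List.length_cons]; omega
  head_eq := rfl
  last_eq := by rw [List.getLast?_cons, p.last_eq]; rfl
  chain := List.isChain_cons.mpr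
    ⟨fun w hw => by rw [p.head_eq, Option.mem_some_iff] at hw; exact hw ▸ hab, p.chain⟩

def ofSuffix (p : GPath E a b) {u w : V} {s : List V} (h : u :: w :: s <:+ p.nodes) :
    GPath E u b where
  nodes := u :: w :: s
  nodup := p.nodup.sublist h.sublist
  two_le := by simp
  head_eq := rfl
  last_eq := (getLast?_eq_of_suffix h (List.cons_ne_nil _ _)).trans p.last_eq
  chain := p.chain.infix h.isInfix

theorem not_blockedBy_iff (p : GPath E a b) (S : Set V) :
    ¬ p.BlockedBy S ↔ DConnecting E S S p.nodes := by
  have hcollider : ∀ {k x v z}, p.nodes[k]? = some x → p.nodes[k + 1]? = some v →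
      p.nodes[k + 2]? = some z → (p.ColliderAt (k + 1) ↔ E x v ∧ E z v) := by
    intro k x v z hx hv hz
    refine ⟨fun ⟨x', v', z', hx', hv', hz', hc⟩ => ?_, fun hc => ⟨x, v, z, hx, hv, hz, hc⟩⟩
    simp_all
  constructor
  · intro hp x v z hxvz
    obtain ⟨k, hx, hv, hz⟩ := triple_infix_iff.mp hxvz
    have hint : p.Interior (k + 1) := ⟨k.succ_pos, (List.getElem?_eq_some_iff.mp hz).1⟩
    refine ⟨fun hc => ?_,
      fun hc hvS => hp ⟨k + 1, v, hint, hv, .inl ⟨mt (hcollider hx hv hz).1 hc, hvS⟩⟩⟩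
    by_contra hd
    exact hp ⟨k + 1, v, hint, hv, .inr ⟨(hcollider hx hv hz).2 hc, fun hvS => hd ⟨v, hvS, .refl⟩,
      fun d hvd hdS => hd ⟨d, hdS, hvd.to_reflTransGen⟩⟩⟩
  · rintro hp ⟨_ | k, v, ⟨hi, hlt⟩, hv, hblock⟩
    · exact absurd hi (lt_irrefl 0)
    obtain ⟨x, hx⟩ : ∃ x, p.nodes[k]? = some x := ⟨_, List.getElem?_eq_getElem (by omega)⟩
    obtain ⟨z, hz⟩ : ∃ z, p.nodes[k + 2]? = some z := ⟨_, List.getElem?_eq_getElem hlt⟩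
    obtain ⟨hcol, hncol⟩ := hp x v z (triple_infix_iff.mpr ⟨k, hx, hv, hz⟩)
    rcases hblock with ⟨hnc, hvS⟩ | ⟨hc, hvS, hd⟩
    · exact hncol (mt (hcollider hx hv hz).2 hnc) hvS
    · obtain ⟨d, hdS, hvd⟩ := hcol ((hcollider hx hv hz).1 hc)
      rcases Relation.reflTransGen_iff_eq_or_transGen.mp hvd with rfl | hvd
      · exact hvS hdS
      · exact hd d hvd hdS

end GPath

section Subsample

variable {xt : V} {V0 : Set V}

theorem reflTransGen_subEdge_some_iff {v d : V} :
    Relation.ReflTransGen (subEdge E xt V0) (some v) (some d) ↔ Relation.ReflTransGen E v d := by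
  refine ⟨fun h => ?_, fun h => Relation.ReflTransGen.lift some (fun _ _ h => h) _ _ h⟩
  suffices ∀ o, Relation.ReflTransGen (subEdge E xt V0) (some v) o →
      ∀ d, o = some d → Relation.ReflTransGen E v d from this _ h d rfl
  intro o h
  induction h with
  | refl => rintro d ⟨⟩; exact .refl
  | @tail b c _ hbc ih =>
    rintro d rfl
    cases b with
    | none => exact hbc.elim
    | some b => exact (ih b rfl).tail hbc

theorem transmits_subEdge_iff {N C : Set V} {x v z : V} :
    Transmits (subEdge E xt V0) (some '' N) (some '' C) (some x) (some v) (some z) ↔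
      Transmits E N C x v z := by
  have hdesc : (∃ d ∈ some '' C, Relation.ReflTransGen (subEdge E xt V0) (some v) d) ↔
      ∃ d ∈ C, Relation.ReflTransGen E v d := by
    constructor
    · rintro ⟨_, ⟨d, hd, rfl⟩, h⟩
      exact ⟨d, hd, reflTransGen_subEdge_some_iff.mp h⟩
    · rintro ⟨d, hd, h⟩
      exact ⟨some d, ⟨d, hd, rfl⟩, reflTransGen_subEdge_some_iff.mpr h⟩
  rw [Transmits, hdesc, (Option.some_injective V).mem_set_image]
  rfl

theorem dConnecting_map_some_iff {N C : Set V} {l : List V} :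
    DConnecting (subEdge E xt V0) (some '' N) (some '' C) (l.map some) ↔ DConnecting E N C l := by
  refine ⟨fun h x v z hxvz => transmits_subEdge_iff.mp (h _ _ _ (hxvz.map some)),
    fun h x v z hxvz => ?_⟩
  obtain ⟨l', hl', heq⟩ := List.infix_map_iff.mp hxvz
  rcases l' with _ | ⟨x', _ | ⟨v', _ | ⟨z', _ | _⟩⟩⟩ <;> simp only [List.map_cons,
    List.map_nil, List.cons.injEq, reduceCtorEq, and_false] at heq
  obtain ⟨rfl, rfl, rfl, -⟩ := heq
  exact transmits_subEdge_iff.mpr (h _ _ _ hl')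

namespace GPath

variable {b : V}

def liftSubEdge (p : GPath E xt b) (V0 : Set V) : GPath (subEdge E xt V0) none (some b) where
  nodes := none :: p.nodes.map some
  nodup := List.nodup_cons.mpr ⟨by simp, p.nodup.map (Option.some_injective V)⟩
  two_le := by have := p.two_le; simp only [List.length_cons, List.length_map]; omega
  head_eq := rfl
  last_eq := by rw [List.getLast?_cons, List.getLast?_map, p.last_eq]; rfl
  chain := List.isChain_cons.mpr ⟨fun w hw => by
    rw [List.head?_map, p.head_eq, Option.map_some, Option.mem_some_iff] at hw
    exact hw ▸ Or.inr (Or.inl rfl), (List.isChain_map some).mpr p.chain⟩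

theorem exists_of_subEdge (q : GPath (subEdge E xt V0) none (some b)) (hxt : xt ≠ b)
    (hb : b ∉ V0) :
    ∃ v, (v = xt ∨ v ∈ V0) ∧ ∃ p : GPath E v b, q.nodes = none :: p.nodes.map some := by
  obtain ⟨o, l, hq⟩ := q.exists_eq_cons_cons
  have hnd := q.nodup
  have hchain := q.chain
  have hlast := q.last_eq
  rw [hq] at hnd hchain hlast
  obtain ⟨_ | ⟨v, l'⟩, hl'⟩ := exists_eq_map_some (List.nodup_cons.mp hnd).1
  · simp at hl'
  rw [hl'] at hnd hchain hlast hq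
  obtain ⟨hhead, hchain⟩ := List.isChain_cons.mp hchain
  have hv : v = xt ∨ v ∈ V0 := (hhead (some v) rfl).resolve_left id
  rw [List.map_cons, List.getLast?_cons_cons, ← List.map_cons, List.getLast?_map,
    Option.map_eq_some_iff] at hlast
  obtain ⟨_, hlast, ⟨⟩⟩ := hlast
  have hl' : l' ≠ [] := by
    rintro rfl
    cases hlast
    rcases hv with rfl | hv
    exacts [hxt rfl, hb hv]
  refine ⟨v, hv, ⟨v :: l', (List.nodup_cons.mp hnd).2.of_map some, ?_, rfl, hlast,
    (List.isChain_map some).mp hchain⟩, hq⟩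
  simpa [Nat.succ_le_iff, List.length_pos_iff] using hl'

end GPath

end Subsample

section BackDoor

variable {t y : V} {Z : Set V}

theorem Transmits.ancestor_of_not_transmits {N C : Set V} {x v z : V}
    (h : Transmits E N (insert t C) x v z) (hn : ¬ Transmits E N C x v z) :
    Relation.ReflTransGen E v t ∧ ∀ d, Relation.ReflTransGen E v d → d ∉ C := by
  obtain ⟨hcol, hncol⟩ := h
  have hnC : ¬ ∃ d ∈ C, Relation.ReflTransGen E v d := fun hC => hn ⟨fun _ => hC, hncol⟩
  by_cases hc : E x v ∧ E z v
  · obtain ⟨d, rfl | hd, hvd⟩ := hcol hc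
    · exact ⟨hvd, fun d' hvd' hd' => hnC ⟨d', hd', hvd'⟩⟩
    · exact (hnC ⟨d, hd, hvd⟩).elim
  · exact (hn ⟨fun h => (hc h).elim, hncol⟩).elim

/-- The witness `v` is the last collider of `l` that only `t` opens. -/
theorem DConnecting.or_exists_suffix {N C : Set V} :
    ∀ {l : List V}, DConnecting E N (insert t C) l → DConnecting E N C l ∨
      ∃ x v w s, x :: v :: w :: s <:+ l ∧ Relation.ReflTransGen E v t ∧
        (∀ d, Relation.ReflTransGen E v d → d ∉ C) ∧ DConnecting E N C (v :: w :: s)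
  | [], _ => .inl fun _ _ _ h => absurd h.length_le (by simp)
  | [_], _ => .inl fun _ _ _ h => absurd h.length_le (by simp)
  | a :: v :: l, h => by
    rcases DConnecting.or_exists_suffix (h.of_isInfix (List.suffix_cons a _).isInfix) with
      hl | ⟨x, v', w, s, hs, hbad⟩
    · by_cases ha : ∀ w ∈ l.head?, Transmits E N C a v w
      · exact .inl (hl.cons ha)
      · push Not at ha
        obtain ⟨w, hw, hn⟩ := ha
        obtain ⟨s, rfl⟩ : ∃ s, l = w :: s := ⟨_, List.eq_cons_of_mem_head? hw⟩
        have hT := h a v w (List.prefix_append [a, v, w] s).isInfix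
        obtain ⟨hvt, hvC⟩ := hT.ancestor_of_not_transmits hn
        exact .inr ⟨a, v, w, s, List.suffix_refl _, hvt, hvC, hl⟩
    · exact .inr ⟨x, v', w, s, hs.trans (List.suffix_cons a _), hbad⟩

/-- Walk along a directed path `u → u' → ⋯ → t`: each step prepends `u'` to the current path, or
cuts the path back to `u'` if it already lies on it; the last node enters `t`. All these nodes are
non-colliders outside `Z`, being descendants of `u`. -/
theorem exists_intoFirst_of_transGen (hAc : Acyclic E) {u : V} (hut : Relation.TransGen E u t) :
    ∀ l : List V, (u :: l).getLast? = some y → (u :: l).Nodup → (u :: l).IsChain (Adj E) →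
      t ∉ u :: l → (∀ d, Relation.ReflTransGen E u d → d ∉ Z) → DConnecting E Z Z (u :: l) →
      ∃ p : GPath E t y, p.IntoFirst ∧ DConnecting E Z Z p.nodes := by
  induction hut using Relation.TransGen.head_induction_on with
  | @single u hut =>
    intro l hlast hnd hchain ht hZ hcon
    refine ⟨⟨t :: u :: l, List.nodup_cons.mpr ⟨ht, hnd⟩, by simp, rfl,
      by rwa [List.getLast?_cons_cons], List.isChain_cons_cons.mpr ⟨.inr hut, hchain⟩⟩,
      ⟨u, rfl, hut⟩, hcon.cons fun _ _ => transmits_of_not_rel (hAc.asymm hut) (hZ u .refl)⟩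
  | @head u u' huu' hu't ih =>
    intro l hlast hnd hchain ht hZ hcon
    have hZ' : ∀ d, Relation.ReflTransGen E u' d → d ∉ Z := fun d hd => hZ d (.head huu' hd)
    by_cases hu' : u' ∈ u :: l
    · obtain ⟨s, l', hs⟩ := List.append_of_mem hu'
      have hsuf : u' :: l' <:+ u :: l := ⟨s, hs.symm⟩
      exact ih l' ((getLast?_eq_of_suffix hsuf (List.cons_ne_nil _ _)).trans hlast)
        (hnd.sublist hsuf.sublist) (hchain.infix hsuf.isInfix) (fun h => ht (hsuf.subset h)) hZ'
        (hcon.of_isInfix hsuf.isInfix)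
    · refine ih (u :: l) (by rwa [List.getLast?_cons_cons]) (List.nodup_cons.mpr ⟨hu', hnd⟩)
        (List.isChain_cons_cons.mpr ⟨.inr huu', hchain⟩) ?_ hZ'
        (hcon.cons fun _ _ => transmits_of_not_rel (hAc.asymm huu') (hZ u .refl))
      intro h
      rcases List.mem_cons.mp h with rfl | h
      exacts [hAc _ hu't, ht h]

theorem exists_intoFirst_of_dConnecting_insert (hAc : Acyclic E) (p : GPath E t y)
    (hp : p.IntoFirst) (h : DConnecting E Z (insert t Z) p.nodes) :
    ∃ p' : GPath E t y, p'.IntoFirst ∧ DConnecting E Z Z p'.nodes := by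
  rcases h.or_exists_suffix with h | ⟨x, v, w, s, hs, hvt, hvZ, hcon⟩
  · exact ⟨p, hp, h⟩
  have ht : t ∉ v :: w :: s := p.head_not_mem_of_suffix hs
  have hsuf : v :: w :: s <:+ p.nodes := (List.suffix_cons x _).trans hs
  rcases Relation.reflTransGen_iff_eq_or_transGen.mp hvt with rfl | hvt
  · exact absurd List.mem_cons_self ht
  exact exists_intoFirst_of_transGen hAc hvt (w :: s)
    ((getLast?_eq_of_suffix hsuf (List.cons_ne_nil _ _)).trans p.last_eq)
    (p.nodup.sublist hsuf.sublist) (p.chain.infix hsuf.isInfix) ht hvZ hcon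

theorem exists_intoFirst_of_parent_path (hAc : Acyclic E) {xt : V} (hxt : E xt t) (hxtZ : xt ∉ Z)
    (hty : t ≠ y) (p : GPath E xt y) (hp : DConnecting E (insert t Z) (insert t Z) p.nodes) :
    ∃ r : GPath E t y, r.IntoFirst ∧ DConnecting E Z (insert t Z) r.nodes := by
  by_cases ht : t ∈ p.nodes
  · obtain ⟨x, w, s, hs⟩ := p.exists_suffix_of_mem ht (fun h => hAc t (.single (h ▸ hxt))) hty
    have hsuf : t :: w :: s <:+ p.nodes := (List.suffix_cons x _).trans hs
    -- `t` is conditioned on, so the path must pass through it as a collider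
    have hwt : E w t := by
      by_contra hwt
      exact (hp x t w ((List.prefix_append [x, t, w] s).isInfix.trans hs.isInfix)).2
        (fun h => hwt h.2) (Set.mem_insert t Z)
    exact ⟨p.ofSuffix hsuf, ⟨w, rfl, hwt⟩,
      (hp.of_isInfix hsuf.isInfix).mono (Set.subset_insert t Z) le_rfl⟩
  · obtain ⟨w, l, hpn⟩ := p.exists_eq_cons_cons
    have hcon := hp.mono (Set.subset_insert t Z) le_rfl
    refine ⟨p.cons ht (.inr hxt), ⟨xt, ?_, hxt⟩, ?_⟩
    · simp [GPath.cons, hpn]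
    · show DConnecting E Z (insert t Z) (t :: p.nodes)
      rw [hpn] at hcon ⊢
      exact hcon.cons fun _ _ => transmits_of_not_rel (hAc.asymm hxt) hxtZ

theorem exists_parent_path_of_intoFirst {xt : V} (hxt : E xt t) (hxtt : xt ≠ t) (hxty : xt ≠ y)
    (p : GPath E t y) (hp : p.IntoFirst) (h : DConnecting E Z Z p.nodes) :
    ∃ l : GPath E xt y, DConnecting E (insert t Z) (insert t Z) l.nodes := by
  by_cases hx : xt ∈ p.nodes
  · obtain ⟨x, w, s, hs⟩ := p.exists_suffix_of_mem hx hxtt hxty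
    have hsuf : xt :: w :: s <:+ p.nodes := (List.suffix_cons x _).trans hs
    exact ⟨p.ofSuffix hsuf, (h.of_isInfix hsuf.isInfix).insert_of_not_mem
      fun ht => p.head_not_mem_of_suffix hs (List.mem_cons_of_mem _ ht)⟩
  · obtain ⟨w, hw, hwt⟩ := hp
    obtain ⟨w', l, hpn⟩ := p.exists_eq_cons_cons
    have hcon := h.insert_of_not_mem p.head_not_mem_tail
    refine ⟨p.cons hx (.inl hxt), ?_⟩
    show DConnecting E (insert t Z) (insert t Z) (xt :: p.nodes)
    rw [hpn] at hcon hw ⊢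
    obtain rfl : w' = w := Option.some.inj hw
    exact hcon.cons fun c hc => by
      obtain rfl : w' = c := Option.some.inj hc
      exact transmits_of_mem hxt hwt (Set.mem_insert t Z)

theorem backDoor_iff_forall_blockedBy (hAc : Acyclic E) {xt : V} (hxt : E xt t)
    (hchild : ∀ w, E t w → w = y) (hleaf : ∀ w, ¬ E y w) (hxty : xt ≠ y) (hty : t ≠ y)
    (hxtZ : xt ∉ Z) (hyZ : y ∉ Z) :
    BackDoor E t y Z ↔ ∀ p : GPath E xt y, p.BlockedBy (insert t Z) := by
  have hdesc : ∀ d, Descendant E t d → d = y := by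
    intro d h
    induction h with
    | single h => exact hchild _ h
    | tail _ h ih => exact (hleaf _ (ih ▸ h)).elim
  constructor
  · rintro ⟨-, hbd⟩ p
    by_contra hp
    obtain ⟨r, hr, hrZ⟩ :=
      exists_intoFirst_of_parent_path hAc hxt hxtZ hty p ((p.not_blockedBy_iff _).mp hp)
    obtain ⟨r', hr', hr'Z⟩ := exists_intoFirst_of_dConnecting_insert hAc r hr hrZ
    exact (r'.not_blockedBy_iff Z).mpr hr'Z (hbd r' hr')
  · intro h
    refine ⟨fun z hz htz => hyZ (hdesc z htz ▸ hz), fun p hp => ?_⟩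
    by_contra hpZ
    obtain ⟨l, hl⟩ := exists_parent_path_of_intoFirst hxt (fun h => hAc t (.single (h ▸ hxt)))
      hxty p hp ((p.not_blockedBy_iff Z).mp hpZ)
    exact (l.not_blockedBy_iff _).mpr hl (h l)

end BackDoor

theorem dSep_subEdge_iff {xt y : V} {V0 S : Set V} (hV0 : V0 ⊆ S) (hxt : xt ∉ S) (hy : y ∉ S)
    (hxty : xt ≠ y) :
    DSep (subEdge E xt V0) none (some y) (some '' S) ↔ ∀ p : GPath E xt y, p.BlockedBy S := by
  have hS : ∀ {v}, some v ∈ some '' S ↔ v ∈ S := (Option.some_injective V).mem_set_image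
  constructor
  · intro h p
    by_contra hp
    refine ((p.liftSubEdge V0).not_blockedBy_iff _).mpr ?_ (h (p.liftSubEdge V0))
    obtain ⟨w, l, hpn⟩ := p.exists_eq_cons_cons
    have hcon := (dConnecting_map_some_iff (xt := xt) (V0 := V0)).mpr
      ((p.not_blockedBy_iff S).mp hp)
    show DConnecting _ _ _ (none :: p.nodes.map some)
    rw [hpn] at hcon ⊢
    exact hcon.cons fun _ _ => transmits_of_not_rel id (mt hS.mp hxt)
  · intro h q
    by_contra hq
    rw [GPath.not_blockedBy_iff] at hq
    obtain ⟨v, hv, p, hqp⟩ := q.exists_of_subEdge hxty (fun hy' => hy (hV0 hy'))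
    obtain ⟨w, l, hpn⟩ := p.exists_eq_cons_cons
    rw [hqp, hpn] at hq
    have hvS : v ∉ S := fun hvS =>
      (hq none (some v) (some w) (List.prefix_append [none, some v, some w] (l.map some)).isInfix).2
        (fun hc => hc.1) (hS.mpr hvS)
    obtain rfl : v = xt := hv.resolve_right fun hv => hvS (hV0 hv)
    refine (p.not_blockedBy_iff S).mpr ?_ (h p)
    rw [hpn]
    exact dConnecting_map_some_iff.mp (hq.of_isInfix (List.suffix_cons _ _).isInfix)

end CausalDAG

open CausalDAG in
theorem stmt2_general {V : Type*} (M : SemiMarkov V)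
    (hA1 : Assumption1 M)
    (xt : V) (hxt : xt ∈ M.Xo) (hedge : M.E xt M.t)
    (V0 : Set V) (hV0 : V0 ⊆ ({M.t} : Set V))
    (Z : Set V) (hZ : Z ⊆ M.Xo \ {xt}) :
    BackDoor M.E M.t M.y Z ↔
      DSep (subEdge M.E xt V0) (none : Option V) (some M.y)
        (some '' (Z ∪ {M.t})) := by
  obtain ⟨-, hchild, hleaf⟩ := hA1
  have hXo : ∀ v ∈ M.Xo, v ≠ M.t ∧ v ≠ M.y := fun v hv =>
    ⟨fun h => M.t_notin (.inl (h ▸ hv)), fun h => M.y_notin (.inl (h ▸ hv))⟩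
  have hxtZ : xt ∉ Z := fun h => (hZ h).2 rfl
  have hyZ : M.y ∉ Z := fun h => (hXo _ (hZ h).1).2 rfl
  rw [Set.union_singleton, dSep_subEdge_iff (hV0.trans (by simp)) (by simp [(hXo xt hxt).1, hxtZ])
    (by simp [M.t_ne_y.symm, hyZ]) (hXo xt hxt).2]
  exact backDoor_iff_forall_blockedBy M.acyclic hedge hchild hleaf (hXo xt hxt).2 M.t_ne_y hxtZ hyZ

open CausalDAG in
/-- equivalence, Corollary 1: `Z` satisfies the back-door criterion
iff `e` and `y` are d-separated by `Z ∪ {t}` in the sub-sampled graph. -/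
theorem stmt2 {V : Type*} [Finite V] (M : SemiMarkov V)
    (hA1 : Assumption1 M)
    (xt : V) (hxt : xt ∈ M.Xo) (hedge : M.E xt M.t)
    (V0 : Set V) (hV0 : V0 ⊆ ({M.t} : Set V))
    (Z : Set V) (hZ : Z ⊆ M.Xo \ {xt}) :
    BackDoor M.E M.t M.y Z ↔
      DSep (subEdge M.E xt V0) (none : Option V) (some M.y)
        (some '' (Z ∪ {M.t})) :=
  stmt2_general M hA1 xt hxt hedge V0 hV0 Z hZ
end

section
/- Let G be a finite DAG and S a set of nodes of G. Let P_1 be a path from a to c and P_2 be a path from c to b with a ≠ b, such that P_1 and P_2 share no node other than c. Suppose neither P_1 nor P_2 is blocked by S, at least one of the two edges of the concatenated path adjacent to c points out of c (so that c is not a collider on the concatenated path), and c ∉ S. Then the concatenation of P_1 and P_2 is a path from a to b in G that is not blocked by S. -/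
/-!
On the concatenation, every interior position other than the junction sees the same three
consecutive nodes as the corresponding position of `P₁` or of `P₂`, and whether a position
blocks depends only on those three nodes; so the concatenation could only be blocked at `c`.
There `c ∉ S`, and `c` is no collider: one path edge leaves `c`, and if it also entered `c`
the two edges would form a directed 2-cycle.
-/

namespace CausalDAG

variable {V : Type*} {E : V → V → Prop}

theorem Acyclic.not_edge_of_edge (hac : Acyclic E) {u v : V} (huv : E u v) : ¬ E v u :=
  fun hvu => hac u (.tail (.single huv) hvu)

namespace GPath

variable {a b c a' b' : V}

theorem nodes_getElem?_zero (p : GPath E a b) : p.nodes[0]? = some a := by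
  rw [← List.head?_eq_getElem?]; exact p.head_eq

theorem nodes_getElem?_length_sub_one (p : GPath E a b) :
    p.nodes[p.nodes.length - 1]? = some b := by
  rw [← List.getLast?_eq_getElem?]; exact p.last_eq

theorem cons_nodes_tail (p : GPath E a b) : a :: p.nodes.tail = p.nodes :=
  List.cons_head?_tail p.head_eq

def BlocksAt (p : GPath E a b) (S : Set V) (i : ℕ) : Prop :=
  ∃ v, p.nodes[i]? = some v ∧
    ((¬ p.ColliderAt i ∧ v ∈ S) ∨ (p.ColliderAt i ∧ v ∉ S ∧ ∀ d, Descendant E v d → d ∉ S))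

theorem blockedBy_iff (p : GPath E a b) (S : Set V) :
    p.BlockedBy S ↔ ∃ i, p.Interior i ∧ p.BlocksAt S i :=
  ⟨fun ⟨i, v, hi, h⟩ => ⟨i, hi, v, h⟩, fun ⟨i, hi, v, h⟩ => ⟨i, v, hi, h⟩⟩

section Window

variable {p : GPath E a b} {q : GPath E a' b'} {i j : ℕ}
  (h₀ : p.nodes[i - 1]? = q.nodes[j - 1]?) (h₁ : p.nodes[i]? = q.nodes[j]?)
  (h₂ : p.nodes[i + 1]? = q.nodes[j + 1]?)
include h₀ h₁ h₂

theorem colliderAt_congr : p.ColliderAt i ↔ q.ColliderAt j := by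
  simp only [ColliderAt, h₀, h₁, h₂]

theorem blocksAt_congr {S : Set V} : p.BlocksAt S i ↔ q.BlocksAt S j := by
  simp only [BlocksAt, colliderAt_congr h₀ h₁ h₂, h₁]

end Window

theorem not_colliderAt_of_edge_out (hac : Acyclic E) {p : GPath E a b} {i : ℕ} {v w : V}
    (hv : p.nodes[i]? = some v) (hw : p.nodes[i - 1]? = some w ∨ p.nodes[i + 1]? = some w)
    (hvw : E v w) : ¬ p.ColliderAt i := by
  rintro ⟨x, v', z, hx, hv', hz, hxv, hzv⟩
  obtain rfl : v' = v := Option.some_inj.mp (hv'.symm.trans hv)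
  rcases hw with hw | hw
  · obtain rfl : x = w := Option.some_inj.mp (hx.symm.trans hw)
    exact hac.not_edge_of_edge hvw hxv
  · obtain rfl : z = w := Option.some_inj.mp (hz.symm.trans hw)
    exact hac.not_edge_of_edge hvw hzv

def append (p : GPath E a c) (q : GPath E c b)
    (hshare : ∀ v, v ∈ p.nodes → v ∈ q.nodes → v = c) : GPath E a b where
  nodes := p.nodes ++ q.nodes.tail
  nodup := by
    refine List.nodup_append.mpr ⟨p.nodup, q.nodup.tail, ?_⟩
    rintro v hvp _ hvq rfl
    have hc : c ∉ q.nodes.tail := by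
      have := q.nodup
      rw [← q.cons_nodes_tail, List.nodup_cons] at this
      exact this.1
    exact hc (hshare v hvp (List.mem_of_mem_tail hvq) ▸ hvq)
  two_le := by
    have := p.two_le; simp only [List.length_append]; omega
  head_eq := by
    rw [List.head?_append, p.head_eq, Option.some_or]
  last_eq := by
    have := q.two_le
    rw [List.getLast?_append, List.getLast?_tail, if_neg (by omega), q.last_eq, Option.some_or]
  chain := by
    refine List.isChain_append.mpr ⟨p.chain, q.chain.tail, ?_⟩
    intro x hx y hy
    rw [p.last_eq, Option.mem_def, Option.some.injEq] at hx
    subst hx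
    have hq : List.IsChain (Adj E) q.nodes := q.chain
    rw [← q.cons_nodes_tail, List.isChain_cons] at hq
    exact hq.1 y hy

section Append

variable {p : GPath E a c} {q : GPath E c b} {hshare : ∀ v, v ∈ p.nodes → v ∈ q.nodes → v = c}

theorem append_nodes_getElem?_of_lt {i : ℕ} (hi : i < p.nodes.length) :
    (p.append q hshare).nodes[i]? = p.nodes[i]? :=
  List.getElem?_append_left hi

theorem append_nodes_getElem?_junction :
    (p.append q hshare).nodes[p.nodes.length - 1]? = some c := by
  have := p.two_le
  rw [append_nodes_getElem?_of_lt (by omega), p.nodes_getElem?_length_sub_one]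

theorem append_nodes_getElem?_of_eq_add {i j : ℕ} (hij : i = p.nodes.length - 1 + j) :
    (p.append q hshare).nodes[i]? = q.nodes[j]? := by
  have := p.two_le
  subst hij
  rcases j with _ | j
  · rw [Nat.add_zero, append_nodes_getElem?_junction, q.nodes_getElem?_zero]
  · rw [append, List.getElem?_append_right (by omega), List.getElem?_tail]
    congr 1
    omega

theorem append_nodes_length :
    (p.append q hshare).nodes.length = p.nodes.length + (q.nodes.length - 1) := by
  rw [append, List.length_append, List.length_tail]

theorem not_colliderAt_append_of_edge_out (hac : Acyclic E)
    (hout : ∃ w, (p.nodes[p.nodes.length - 2]? = some w ∧ E c w) ∨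
      (q.nodes[1]? = some w ∧ E c w)) :
    ¬ (p.append q hshare).ColliderAt (p.nodes.length - 1) := by
  have := p.two_le
  obtain ⟨w, ⟨hw, hcw⟩ | ⟨hw, hcw⟩⟩ := hout
  · refine not_colliderAt_of_edge_out hac append_nodes_getElem?_junction (.inl ?_) hcw
    rw [append_nodes_getElem?_of_lt (by omega), ← hw]
    rfl
  · refine not_colliderAt_of_edge_out hac append_nodes_getElem?_junction (.inr ?_) hcw
    rw [append_nodes_getElem?_of_eq_add (j := 1) rfl, ← hw]

theorem not_blockedBy_append {S : Set V} (hp : ¬ p.BlockedBy S) (hq : ¬ q.BlockedBy S)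
    (hc : ¬ (p.append q hshare).ColliderAt (p.nodes.length - 1)) (hcS : c ∉ S) :
    ¬ (p.append q hshare).BlockedBy S := by
  rw [blockedBy_iff] at hp hq ⊢
  rintro ⟨i, ⟨hi₀, hi⟩, hblock⟩
  rw [append_nodes_length] at hi
  rcases lt_trichotomy i (p.nodes.length - 1) with hlt | rfl | hgt
  · refine hp ⟨i, ⟨hi₀, by omega⟩, (blocksAt_congr ?_ ?_ ?_).mp hblock⟩ <;>
      exact append_nodes_getElem?_of_lt (by omega)
  · obtain ⟨v, hv, ⟨-, hvS⟩ | ⟨hcoll, -⟩⟩ := hblock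
    · rw [append_nodes_getElem?_junction, Option.some_inj] at hv
      exact hcS (hv ▸ hvS)
    · exact hc hcoll
  · refine hq ⟨i - (p.nodes.length - 1), ⟨by omega, by omega⟩,
      (blocksAt_congr ?_ ?_ ?_).mp hblock⟩ <;>
      exact append_nodes_getElem?_of_eq_add (by omega)

end Append

end GPath

end CausalDAG

open CausalDAG in
theorem stmt10_general {V : Type*} (E : V → V → Prop) (hac : Acyclic E)
    {a b c : V}
    (P1 : GPath E a c) (P2 : GPath E c b) (S : Set V)
    (hshare : ∀ v, v ∈ P1.nodes → v ∈ P2.nodes → v = c)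
    (h1 : ¬ P1.BlockedBy S) (h2 : ¬ P2.BlockedBy S)
    (hout : ∃ w, (P1.nodes[P1.nodes.length - 2]? = some w ∧ E c w) ∨
      (P2.nodes[1]? = some w ∧ E c w))
    (hcS : c ∉ S) :
    ∃ P : GPath E a b, P.nodes = P1.nodes ++ P2.nodes.tail ∧
      ¬ P.BlockedBy S :=
  ⟨P1.append P2 hshare, rfl,
    GPath.not_blockedBy_append h1 h2 (GPath.not_colliderAt_append_of_edge_out hac hout) hcS⟩

open CausalDAG in
/-- concatenating two unblocked paths at an unconditioned
non-collider yields an unblocked path. -/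
theorem stmt10 {V : Type*} [Finite V] (E : V → V → Prop) (hac : Acyclic E)
    {a b c : V} (hab : a ≠ b)
    (P1 : GPath E a c) (P2 : GPath E c b) (S : Set V)
    (hshare : ∀ v, v ∈ P1.nodes → v ∈ P2.nodes → v = c)
    (h1 : ¬ P1.BlockedBy S) (h2 : ¬ P2.BlockedBy S)
    (hout : ∃ w, (P1.nodes[P1.nodes.length - 2]? = some w ∧ E c w) ∨
      (P2.nodes[1]? = some w ∧ E c w))
    (hcS : c ∉ S) :
    ∃ P : GPath E a b, P.nodes = P1.nodes ++ P2.nodes.tail ∧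
      ¬ P.BlockedBy S :=
  stmt10_general E hac P1 P2 S hshare h1 h2 hout hcS
end
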